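/- arXiv:math/9801071 — 3 statements merged into one kernel-verified Lean document; each statement's English description precedes it below -/
import Mathlib

section
/- Let A, B ∈ SL(2,ℂ) and suppose that tr(A), tr(B) and tr(A·B) are all real. Then every element C of the subgroup of SL(2,ℂ) generated by A and B has real trace. -/
/-!
Let `V` be the `K`-span of `1, A, B, AB` in `M₂(L)`, for `A, B ∈ SL(2, L)` whose traces and
the trace of `AB` lie in `K`. Cayley–Hamilton `X² = tr X • X - 1` and its polarization
`YX = tr X • Y + tr Y • X + (tr XY - tr X tr Y) • 1 - XY` give `AV ⊆ V` and `BV ⊆ V`; since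
`X⁻¹ = tr X • 1 - X` in `SL(2)` and the trace maps `V` into `K`, also `A⁻¹V ⊆ V` and
`B⁻¹V ⊆ V`. Hence `V` contains the group generated by `A` and `B`, and all its traces lie in `K`.
-/

open Matrix Submodule

namespace Matrix

variable {R : Type*} [CommRing R]

theorem mul_self_fin_two (M : Matrix (Fin 2) (Fin 2) R) :
    M * M = M.trace • M - M.det • 1 := by
  ext i j
  fin_cases i <;> fin_cases j <;> simp [mul_apply, trace_fin_two, det_fin_two] <;> ring

theorem mul_swap_fin_two (M N : Matrix (Fin 2) (Fin 2) R) :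
    N * M = M.trace • N + N.trace • M + ((M * N).trace - M.trace * N.trace) • 1 - M * N := by
  ext i j
  fin_cases i <;> fin_cases j <;> simp [mul_apply, trace_fin_two] <;> ring

theorem adjugate_fin_two_eq_trace_smul_one_sub (M : Matrix (Fin 2) (Fin 2) R) :
    M.adjugate = M.trace • 1 - M := by
  rw [adjugate_fin_two]
  ext i j
  fin_cases i <;> fin_cases j <;> simp [trace_fin_two]

end Matrix

theorem Submodule.smul_mem_of_mem_range_algebraMap {K L M : Type*} [CommRing K] [Ring L]
    [Algebra K L] [AddCommGroup M] [Module K M] [Module L M] [IsScalarTower K L M]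
    (p : Submodule K M) {t : L} (ht : t ∈ (algebraMap K L).range) {x : M} (hx : x ∈ p) :
    t • x ∈ p := by
  obtain ⟨k, rfl⟩ := ht
  rw [algebraMap_smul]
  exact p.smul_mem k hx

namespace Matrix

variable {K L : Type*} [CommRing K] [CommRing L] [Algebra K L]

variable (K) in
def twoGenSpan (A B : Matrix (Fin 2) (Fin 2) L) : Submodule K (Matrix (Fin 2) (Fin 2) L) :=
  span K {1, A, B, A * B}

variable {A B : Matrix (Fin 2) (Fin 2) L}

theorem one_mem_twoGenSpan : 1 ∈ twoGenSpan K A B := subset_span (by simp)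

theorem left_mem_twoGenSpan : A ∈ twoGenSpan K A B := subset_span (by simp)

theorem right_mem_twoGenSpan : B ∈ twoGenSpan K A B := subset_span (by simp)

theorem mul_mem_twoGenSpan : A * B ∈ twoGenSpan K A B := subset_span (by simp)

theorem mul_self_of_det_eq_one (hA : A.det = 1) : A * A = A.trace • A - 1 := by
  rw [mul_self_fin_two, hA, one_smul]

theorem mul_mul_right_of_det_eq_one (hB : B.det = 1) :
    B * (A * B) = A + (A * B).trace • B - A.trace • 1 := by
  rw [← Matrix.mul_assoc, mul_swap_fin_two A B]
  simp only [sub_mul, add_mul, smul_mul_assoc, one_mul, Matrix.mul_assoc,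
    mul_self_of_det_eq_one hB, mul_sub, mul_smul_comm, mul_one]
  module

variable (ha : A.trace ∈ (algebraMap K L).range) (hb : B.trace ∈ (algebraMap K L).range)
  (hab : (A * B).trace ∈ (algebraMap K L).range)

include ha in
theorem left_mul_mem_twoGenSpan (hA : A.det = 1) {X : Matrix (Fin 2) (Fin 2) L}
    (hX : X ∈ twoGenSpan K A B) : A * X ∈ twoGenSpan K A B := by
  suffices twoGenSpan K A B ≤ (twoGenSpan K A B).comap (LinearMap.mulLeft K A) from this hX
  have hAAB : A * (A * B) = A.trace • (A * B) - B := by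
    rw [← Matrix.mul_assoc, mul_self_of_det_eq_one hA, sub_mul, smul_mul_assoc, one_mul]
  refine span_le.mpr ?_
  simp only [Set.insert_subset_iff, Set.singleton_subset_iff, SetLike.mem_coe, mem_comap,
    LinearMap.mulLeft_apply, Matrix.mul_one, mul_self_of_det_eq_one hA, hAAB]
  exact ⟨left_mem_twoGenSpan,
    sub_mem (smul_mem_of_mem_range_algebraMap _ ha left_mem_twoGenSpan) one_mem_twoGenSpan,
    mul_mem_twoGenSpan,
    sub_mem (smul_mem_of_mem_range_algebraMap _ ha mul_mem_twoGenSpan) right_mem_twoGenSpan⟩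

include ha hb hab in
theorem right_mul_mem_twoGenSpan (hB : B.det = 1) {X : Matrix (Fin 2) (Fin 2) L}
    (hX : X ∈ twoGenSpan K A B) : B * X ∈ twoGenSpan K A B := by
  suffices twoGenSpan K A B ≤ (twoGenSpan K A B).comap (LinearMap.mulLeft K B) from this hX
  have hc : (A * B).trace - A.trace * B.trace ∈ (algebraMap K L).range :=
    sub_mem hab (mul_mem ha hb)
  refine span_le.mpr ?_
  simp only [Set.insert_subset_iff, Set.singleton_subset_iff, SetLike.mem_coe, mem_comap,
    LinearMap.mulLeft_apply, Matrix.mul_one, mul_self_of_det_eq_one hB, mul_swap_fin_two A B,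
    mul_mul_right_of_det_eq_one hB]
  exact ⟨right_mem_twoGenSpan,
    sub_mem (add_mem (add_mem (smul_mem_of_mem_range_algebraMap _ ha right_mem_twoGenSpan)
      (smul_mem_of_mem_range_algebraMap _ hb left_mem_twoGenSpan))
      (smul_mem_of_mem_range_algebraMap _ hc one_mem_twoGenSpan)) mul_mem_twoGenSpan,
    sub_mem (smul_mem_of_mem_range_algebraMap _ hb right_mem_twoGenSpan) one_mem_twoGenSpan,
    sub_mem (add_mem left_mem_twoGenSpan (smul_mem_of_mem_range_algebraMap _ hab
      right_mem_twoGenSpan)) (smul_mem_of_mem_range_algebraMap _ ha one_mem_twoGenSpan)⟩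

include ha hb hab in
theorem trace_mem_range_of_mem_twoGenSpan {X : Matrix (Fin 2) (Fin 2) L}
    (hX : X ∈ twoGenSpan K A B) : X.trace ∈ (algebraMap K L).range := by
  suffices twoGenSpan K A B ≤
      (LinearMap.range (Algebra.linearMap K L)).comap (traceLinearMap (Fin 2) K L) from this hX
  refine span_le.mpr ?_
  simp only [Set.insert_subset_iff, Set.singleton_subset_iff, SetLike.mem_coe, mem_comap]
  exact ⟨⟨2, by simp [map_ofNat]⟩, ha, hb, hab⟩

end Matrix

namespace Matrix.SpecialLinearGroup

open scoped MatrixGroups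

variable {K L : Type*} [CommRing K] [CommRing L] [Algebra K L] {A B : SL(2, L)}
  (ha : (A : Matrix (Fin 2) (Fin 2) L).trace ∈ (algebraMap K L).range)
  (hb : (B : Matrix (Fin 2) (Fin 2) L).trace ∈ (algebraMap K L).range)
  (hab : ((A : Matrix (Fin 2) (Fin 2) L) * B).trace ∈ (algebraMap K L).range)
include ha hb hab

theorem coe_mem_twoGenSpan_of_mem_closure {C : SL(2, L)} (hC : C ∈ Subgroup.closure {A, B}) :
    (C : Matrix (Fin 2) (Fin 2) L) ∈ twoGenSpan K A B := by
  have left_mul_mem (X : SL(2, L)) (hX : X ∈ ({A, B} : Set SL(2, L)))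
      {Y : Matrix (Fin 2) (Fin 2) L} (hY : Y ∈ twoGenSpan K A B) :
      (X : Matrix (Fin 2) (Fin 2) L) * Y ∈ twoGenSpan K A B := by
    rcases hX with rfl | rfl
    exacts [left_mul_mem_twoGenSpan ha (det_coe _) hY,
      right_mul_mem_twoGenSpan ha hb hab (det_coe _) hY]
  induction hC using Subgroup.closure_induction_left with
  | one => exact one_mem_twoGenSpan
  | mul_left X hX Y _ hY => exact left_mul_mem X hX hY
  | inv_mul_cancel X hX Y _ hY =>
    have hXV : (X : Matrix (Fin 2) (Fin 2) L) ∈ twoGenSpan K A B := by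
      rcases hX with rfl | rfl
      exacts [left_mem_twoGenSpan, right_mem_twoGenSpan]
    rw [coe_mul, coe_inv, adjugate_fin_two_eq_trace_smul_one_sub, sub_mul, smul_mul_assoc,
      Matrix.one_mul]
    exact sub_mem (smul_mem_of_mem_range_algebraMap _
      (trace_mem_range_of_mem_twoGenSpan ha hb hab hXV) hY) (left_mul_mem X hX hY)

theorem trace_mem_range_of_mem_closure {C : SL(2, L)} (hC : C ∈ Subgroup.closure {A, B}) :
    (C : Matrix (Fin 2) (Fin 2) L).trace ∈ (algebraMap K L).range :=
  trace_mem_range_of_mem_twoGenSpan ha hb hab (coe_mem_twoGenSpan_of_mem_closure ha hb hab hC)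

end Matrix.SpecialLinearGroup

theorem Complex.im_eq_zero_iff_mem_range_algebraMap {z : ℂ} :
    z.im = 0 ↔ z ∈ (algebraMap ℝ ℂ).range :=
  ⟨fun h ↦ ⟨z.re, Complex.ext rfl h.symm⟩, by rintro ⟨r, rfl⟩; simp⟩

/-- If `A, B ∈ SL(2,ℂ)` have real traces and `tr (A*B)` is real, then every element of the
subgroup generated by `A` and `B` has real trace. -/
theorem real_trace_of_mem_closure (A B : Matrix.SpecialLinearGroup (Fin 2) ℂ)
    (hA : (Matrix.trace ((A : Matrix (Fin 2) (Fin 2) ℂ))).im = 0)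
    (hB : (Matrix.trace ((B : Matrix (Fin 2) (Fin 2) ℂ))).im = 0)
    (hAB : (Matrix.trace ((A * B : Matrix.SpecialLinearGroup (Fin 2) ℂ) :
        Matrix (Fin 2) (Fin 2) ℂ)).im = 0)
    (C : Matrix.SpecialLinearGroup (Fin 2) ℂ) (hC : C ∈ Subgroup.closure {A, B}) :
    (Matrix.trace ((C : Matrix (Fin 2) (Fin 2) ℂ))).im = 0 := by
  have hAB' : ((A : Matrix (Fin 2) (Fin 2) ℂ) * B).trace.im = 0 := hAB
  simp only [Complex.im_eq_zero_iff_mem_range_algebraMap] at hA hB hAB' ⊢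
  exact SpecialLinearGroup.trace_mem_range_of_mem_closure hA hB hAB' hC
end

section
/- Let A, B ∈ SL(2,ℂ) be matrices with no common eigenvector in ℂ², and suppose tr(A), tr(B) and tr(A·B) are all real. Then there exists P ∈ GL(2,ℂ) such that either P·C·P⁻¹ has all real entries for every C in the subgroup generated by A and B, or P·C·P⁻¹ is unitary (lies in SU(2)) for every C in the subgroup generated by A and B. -/
/-!
Let `x, y, z` be the traces of `A`, `B`, `AB` and let `v` be an eigenvector of `A`, with eigenvalue
`μ`. As `v` is not an eigenvector of `B`, `(v, Bv)` is a basis; by Cayley–Hamilton `A` acts on it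
by `!![μ, z - μ⁻¹ y; 0, μ⁻¹]` and `B` by its companion matrix `!![0, -1; 1, y]`. If `μ` is real,
both are real. Otherwise `μ + μ⁻¹ = x` forces `μ⁻¹ = conj μ`, and the reality of `y` and `z`
lets us write `z - μ⁻¹ y = q (μ - conj μ)` with `y = q + conj q`. Conjugating by
`!![1, q; 0, s]`, where `ε s² = 1 - |q|²`, turns the pair into
`diag(μ, conj μ)` and `!![q, -ε s; s, conj q]`. Now `|q| = 1` would produce a common eigenvector;
`|q| < 1` (`ε = 1`) gives unitary matrices, and `|q| > 1` (`ε = -1`) gives matrices of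
`SU(1,1)`, which the Cayley transform carries to real ones. Since conjugation is a homomorphism
and both target sets are closed under products and inverses in `SL(2,ℂ)`, the whole generated
subgroup follows.
-/

open Matrix Complex ComplexConjugate

section

variable {n R : Type*} [Fintype n] [DecidableEq n] [CommRing R]

def HasCommonEigenvector (A B : Matrix n n R) : Prop :=
  ∃ v : n → R, v ≠ 0 ∧ (∃ μ : R, A *ᵥ v = μ • v) ∧ ∃ ν : R, B *ᵥ v = ν • v

def PairConj (A B A' B' : Matrix n n R) : Prop :=
  ∃ P : GL n R, (P : Matrix n n R) * A * (↑P⁻¹ : Matrix n n R) = A' ∧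
    (P : Matrix n n R) * B * (↑P⁻¹ : Matrix n n R) = B'

namespace PairConj

variable {A B A' B' A'' B'' : Matrix n n R}

theorem of_mul_eq (P : GL n R) (hA : (P : Matrix n n R) * A = A' * P)
    (hB : (P : Matrix n n R) * B = B' * P) : PairConj A B A' B' :=
  ⟨P, (Units.mul_inv_eq_iff_eq_mul P).2 hA, (Units.mul_inv_eq_iff_eq_mul P).2 hB⟩

theorem symm : PairConj A B A' B' → PairConj A' B' A B := by
  rintro ⟨P, rfl, rfl⟩
  exact ⟨P⁻¹, by simp [mul_assoc], by simp [mul_assoc]⟩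

theorem trans : PairConj A B A' B' → PairConj A' B' A'' B'' → PairConj A B A'' B'' := by
  rintro ⟨P, rfl, rfl⟩ ⟨Q, rfl, rfl⟩
  exact ⟨Q * P, by simp [mul_assoc], by simp [mul_assoc]⟩

theorem hasCommonEigenvector (h : PairConj A B A' B') :
    HasCommonEigenvector A B → HasCommonEigenvector A' B' := by
  obtain ⟨P, rfl, rfl⟩ := h
  have hPinv : ∀ w, (↑P⁻¹ : Matrix n n R) *ᵥ ((P : Matrix n n R) *ᵥ w) = w := fun w => by
    rw [mulVec_mulVec, Units.inv_mul, one_mulVec]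
  rintro ⟨v, hv, ⟨μ, hμ⟩, ⟨ν, hν⟩⟩
  refine ⟨(P : Matrix n n R) *ᵥ v, fun h0 => hv ?_, ⟨μ, ?_⟩, ⟨ν, ?_⟩⟩
  · rw [← hPinv v, h0, mulVec_zero]
  · rw [← mulVec_mulVec, ← mulVec_mulVec, hPinv, hμ, mulVec_smul]
  · rw [← mulVec_mulVec, ← mulVec_mulVec, hPinv, hν, mulVec_smul]

end PairConj

theorem units_conj_inv_eq_adjugate (P : GL n R) (C : SpecialLinearGroup n R) :
    (P : Matrix n n R) * ((C⁻¹ : SpecialLinearGroup n R) : Matrix n n R) *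
        (↑P⁻¹ : Matrix n n R) =
      ((P : Matrix n n R) * (C : Matrix n n R) * (↑P⁻¹ : Matrix n n R)).adjugate := by
  set M := (P : Matrix n n R) * (C : Matrix n n R) * (↑P⁻¹ : Matrix n n R)
  set M' := (P : Matrix n n R) * ((C⁻¹ : SpecialLinearGroup n R) : Matrix n n R) *
    (↑P⁻¹ : Matrix n n R)
  have hdet : M.det = 1 := by rw [det_units_conj]; exact C.det_coe
  have hC : (C : Matrix n n R) * ((C⁻¹ : SpecialLinearGroup n R) : Matrix n n R) = 1 := by
    rw [Matrix.SpecialLinearGroup.coe_inv, mul_adjugate, C.det_coe, one_smul]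
  have hMM' : M * M' = 1 := by
    calc M * M' = (P : Matrix n n R) * ((C : Matrix n n R) *
            ((C⁻¹ : SpecialLinearGroup n R) : Matrix n n R)) * (↑P⁻¹ : Matrix n n R) := by
          simp only [M, M', mul_assoc, Units.inv_mul_cancel_left]
      _ = 1 := by rw [hC, mul_one, Units.mul_inv]
  rw [← mul_one M.adjugate, ← hMM', ← mul_assoc, adjugate_mul, hdet, one_smul, one_mul]

theorem conj_mem_of_mem_closure {S : Submonoid (Matrix n n R)}
    (hS : ∀ M ∈ S, M.det = 1 → M.adjugate ∈ S) (P : GL n R) {s : Set (SpecialLinearGroup n R)}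
    (hs : ∀ C ∈ s, (P : Matrix n n R) * (C : Matrix n n R) * (↑P⁻¹ : Matrix n n R) ∈ S)
    {C : SpecialLinearGroup n R} (hC : C ∈ Subgroup.closure s) :
    (P : Matrix n n R) * (C : Matrix n n R) * (↑P⁻¹ : Matrix n n R) ∈ S := by
  induction hC using Subgroup.closure_induction with
  | mem C hC => exact hs C hC
  | one => simp [S.one_mem]
  | mul C D _ _ hC hD => simpa [mul_assoc] using S.mul_mem hC hD
  | inv C _ hC =>
    rw [units_conj_inv_eq_adjugate]
    exact hS _ hC (by rw [det_units_conj]; exact C.det_coe)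

end

section

variable (n : Type*) [Fintype n] [DecidableEq n]

def realMatrices : Subring (Matrix n n ℂ) := (ofRealHom.mapMatrix).range

variable {n}

theorem mem_realMatrices_iff {M : Matrix n n ℂ} :
    M ∈ realMatrices n ↔ ∀ i j, (M i j).im = 0 := by
  refine ⟨?_, fun h => ⟨M.map re, ext fun i j => Complex.ext (by simp) (by simp [h])⟩⟩
  rintro ⟨N, rfl⟩ i j
  simp

theorem adjugate_mem_realMatrices {M : Matrix n n ℂ} (hM : M ∈ realMatrices n) :
    M.adjugate ∈ realMatrices n := by
  obtain ⟨N, rfl⟩ := hM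
  exact ⟨N.adjugate, RingHom.map_adjugate _ _⟩

theorem adjugate_mem_unitaryGroup {M : Matrix n n ℂ} (hM : M ∈ unitaryGroup n ℂ)
    (hdet : M.det = 1) : M.adjugate ∈ unitaryGroup n ℂ := by
  have : M.adjugate = star M := by
    rw [← mul_one M.adjugate, ← mem_unitaryGroup_iff.1 hM, ← mul_assoc, adjugate_mul, hdet,
      one_smul, one_mul]
  exact this ▸ Unitary.star_mem hM

def ConjRealOrUnitary (A B : Matrix n n ℂ) : Prop :=
  ∃ A' B', PairConj A B A' B' ∧
    (A' ∈ realMatrices n ∧ B' ∈ realMatrices n ∨ A' ∈ unitaryGroup n ℂ ∧ B' ∈ unitaryGroup n ℂ)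

theorem ConjRealOrUnitary.of_pairConj {A B A' B' : Matrix n n ℂ} (h : PairConj A B A' B') :
    ConjRealOrUnitary A' B' → ConjRealOrUnitary A B
  | ⟨A'', B'', h', hmem⟩ => ⟨A'', B'', h.trans h', hmem⟩

end

section TwoByTwo

theorem adjugate_fin_two_eq_trace_smul_sub {R : Type*} [CommRing R]
    (M : Matrix (Fin 2) (Fin 2) R) : M.adjugate = M.trace • 1 - M := by
  ext i j
  fin_cases i <;> fin_cases j <;> simp [adjugate_fin_two, trace_fin_two]

theorem mul_transpose_of_mulVec_eq {R : Type*} [CommRing R] (X : Matrix (Fin 2) (Fin 2) R)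
    {v w : Fin 2 → R} {a b c d : R} (hv : X *ᵥ v = a • v + c • w)
    (hw : X *ᵥ w = b • v + d • w) :
    X * (of ![v, w])ᵀ = (of ![v, w])ᵀ * !![a, b; c, d] := by
  ext i j
  have hv := congrFun hv i
  have hw := congrFun hw i
  simp only [mulVec, dotProduct, Fin.sum_univ_two, Pi.add_apply, Pi.smul_apply,
    smul_eq_mul] at hv hw
  fin_cases j <;> simp [mul_apply, Fin.sum_univ_two, hv, hw] <;> ring

variable {K : Type*} [Field K]

theorem adjugate_mulVec_eq_inv_smul {n : Type*} [Fintype n] [DecidableEq n] {A : Matrix n n K}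
    (hA : A.det = 1) {v : n → K} {μ : K} (hv0 : v ≠ 0) (hv : A *ᵥ v = μ • v) :
    A.adjugate *ᵥ v = μ⁻¹ • v := by
  have h : μ • (A.adjugate *ᵥ v) = v := by
    rw [← mulVec_smul, ← hv, mulVec_mulVec, adjugate_mul, hA, one_smul, one_mulVec]
  have hμ : μ ≠ 0 := by
    rintro rfl
    exact hv0 (by simpa using h.symm)
  exact (eq_inv_smul_iff₀ hμ).2 h

theorem pairConj_companion {A B : Matrix (Fin 2) (Fin 2) K} (hA : A.det = 1) (hB : B.det = 1)
    (hAB : ¬HasCommonEigenvector A B) {v : Fin 2 → K} {μ : K} (hv0 : v ≠ 0)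
    (hv : A *ᵥ v = μ • v) :
    PairConj A B !![μ, (A * B).trace - μ⁻¹ * B.trace; 0, μ⁻¹] !![0, -1; 1, B.trace] := by
  have hBB : B * B = B.trace • B - 1 := by
    have := mul_adjugate B
    rw [adjugate_fin_two_eq_trace_smul_sub, mul_sub, Matrix.mul_smul, mul_one, hB,
      one_smul] at this
    rw [← this, sub_sub_cancel]
  have hBBv : B *ᵥ (B *ᵥ v) = (-1 : K) • v + B.trace • (B *ᵥ v) := by
    rw [mulVec_mulVec, hBB, sub_mulVec, smul_mulVec, one_mulVec]
    module
  have hABadj : A * B = (A * B).trace • 1 - B.adjugate * A.adjugate := by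
    rw [← adjugate_mul_distrib, adjugate_fin_two_eq_trace_smul_sub (A * B), sub_sub_cancel]
  have hABv : A *ᵥ (B *ᵥ v) = ((A * B).trace - μ⁻¹ * B.trace) • v + μ⁻¹ • (B *ᵥ v) := by
    conv_lhs => rw [mulVec_mulVec, hABadj, sub_mulVec, ← mulVec_mulVec,
      adjugate_mulVec_eq_inv_smul hA hv0 hv, adjugate_fin_two_eq_trace_smul_sub B]
    simp only [mulVec_smul, sub_mulVec, smul_mulVec, one_mulVec]
    module
  have hQ : IsUnit (of ![v, B *ᵥ v])ᵀ := by
    refine (isUnit_transpose _).2 (linearIndependent_rows_iff_isUnit.1 ?_)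
    exact (LinearIndependent.pair_iff' hv0).2 fun a ha => hAB ⟨v, hv0, ⟨μ, hv⟩, ⟨a, ha.symm⟩⟩
  refine (PairConj.of_mul_eq hQ.unit ?_ ?_).symm <;> rw [IsUnit.unit_spec] <;> symm
  · exact mul_transpose_of_mulVec_eq A (by simp [hv]) hABv
  · exact mul_transpose_of_mulVec_eq B (by simp) hBBv

end TwoByTwo

theorem inv_eq_conj_of_im_add_inv_eq_zero {z : ℂ} (hz : z.im ≠ 0) (h : (z + z⁻¹).im = 0) :
    z⁻¹ = conj z := by
  have hz0 : normSq z ≠ 0 := fun h0 => hz (by simp [normSq_eq_zero.1 h0])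
  have hn : normSq z = 1 := by
    simp only [add_im, inv_im] at h
    field_simp at h
    have := (mul_eq_zero.1 (h.trans (mul_zero _))).resolve_left hz
    linarith
  rw [inv_def, hn]
  simp

theorem fin_two_mem_unitaryGroup {p r : ℂ} (h : normSq p + normSq r = 1) :
    !![p, -conj r; r, conj p] ∈ unitaryGroup (Fin 2) ℂ := by
  have hp := mul_conj p
  have hr := mul_conj r
  have h' : (normSq p : ℂ) + normSq r = 1 := by exact_mod_cast h
  rw [mem_unitaryGroup_iff, star_eq_conjTranspose]
  ext i j
  fin_cases i <;> fin_cases j <;> simp [mul_apply, Fin.sum_univ_two, conjTranspose_apply]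
  · linear_combination hp + hr + h'
  · ring
  · ring
  · linear_combination hp + hr + h'

/-- The Cayley transform `!![1, -I; -I, 1]` conjugates matrices of the shape of `SU(1,1)`
into real matrices. -/
theorem cayley_mul (p r : ℂ) :
    !![1, -I; -I, 1] * !![p, r; conj r, conj p] =
      !![((p.re - r.im : ℝ) : ℂ), ((r.re - p.im : ℝ) : ℂ); ((r.re + p.im : ℝ) : ℂ),
        ((p.re + r.im : ℝ) : ℂ)] * !![1, -I; -I, 1] := by
  ext i j
  fin_cases i <;> fin_cases j <;> simp [Complex.ext_iff] <;> constructor <;> ring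

theorem conjRealOrUnitary_of_su11 (p r p' r' : ℂ) :
    ConjRealOrUnitary !![p, r; conj r, conj p] !![p', r'; conj r', conj p'] :=
  ⟨_, _, .of_mul_eq (.mkOfDetNeZero !![1, -I; -I, 1] (by simp [det_fin_two_of]))
    (cayley_mul p r) (cayley_mul p' r'),
    Or.inl ⟨by simp [mem_realMatrices_iff, Fin.forall_fin_two],
      by simp [mem_realMatrices_iff, Fin.forall_fin_two]⟩⟩

theorem pairConj_diagonal (μ ν q : ℂ) {s ε : ℝ} (hs : s ≠ 0) (hε : ε * s ^ 2 = 1 - normSq q) :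
    PairConj !![μ, q * (μ - ν); 0, ν] !![0, -1; 1, q + conj q]
      !![μ, 0; 0, ν] !![q, -(ε * s); s, conj q] := by
  have hq := mul_conj q
  have hε' : (ε : ℂ) * s ^ 2 = 1 - normSq q := by exact_mod_cast hε
  refine .of_mul_eq (.mkOfDetNeZero !![1, q; 0, (s : ℂ)] (by simpa using hs)) ?_ ?_ <;>
    ext i j <;> fin_cases i <;> fin_cases j <;> simp
  · ring
  · ring
  · linear_combination hq + hε'
  · ring

theorem hasCommonEigenvector_of_normSq_eq_one (μ ν : ℂ) {q : ℂ} (hq : normSq q = 1) :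
    HasCommonEigenvector !![μ, q * (μ - ν); 0, ν] !![0, -1; 1, q + conj q] := by
  have hq' : q * conj q = 1 := by rw [mul_conj, hq, ofReal_one]
  refine ⟨![q, -1], by simp, ⟨ν, ?_⟩, ⟨conj q, ?_⟩⟩ <;> ext i <;> fin_cases i <;> simp
  · ring
  · linear_combination -hq'

theorem conjRealOrUnitary_of_elliptic {μ y z : ℂ} (hμ : μ.im ≠ 0) (hμinv : μ⁻¹ = conj μ)
    (hy : y.im = 0) (hz : z.im = 0)
    (h : ¬HasCommonEigenvector !![μ, z - μ⁻¹ * y; 0, μ⁻¹] !![0, -1; 1, y]) :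
    ConjRealOrUnitary !![μ, z - μ⁻¹ * y; 0, μ⁻¹] !![0, -1; 1, y] := by
  have hsub : μ - conj μ ≠ 0 := by
    rw [sub_conj]
    simpa using hμ
  obtain ⟨q, hβ, rfl⟩ : ∃ q : ℂ, z - μ⁻¹ * y = q * (μ - conj μ) ∧ y = q + conj q := by
    refine ⟨(z - conj μ * y) / (μ - conj μ), by rw [hμinv, div_mul_cancel₀ _ hsub], ?_⟩
    have hsub' : conj μ - μ ≠ 0 := sub_ne_zero.2 (sub_ne_zero.1 hsub).symm
    simp only [map_div₀, map_sub, map_mul, conj_conj, conj_eq_iff_im.2 hy, conj_eq_iff_im.2 hz]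
    field_simp
    ring
  rw [hβ, hμinv] at h ⊢
  have hμn : normSq μ = 1 := by
    have hμ0 : μ ≠ 0 := fun h0 => hμ (by simp [h0])
    exact_mod_cast (mul_conj μ).symm.trans (hμinv ▸ mul_inv_cancel₀ hμ0)
  rcases lt_trichotomy (normSq q) 1 with hlt | heq | hgt
  · have hs : √(1 - normSq q) ≠ 0 := (Real.sqrt_pos.2 (by linarith)).ne'
    refine ⟨_, _, pairConj_diagonal μ (conj μ) q (ε := 1) hs ?_, Or.inr ⟨?_, ?_⟩⟩
    · rw [one_mul, Real.sq_sqrt (by linarith)]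
    · simpa using fin_two_mem_unitaryGroup (p := μ) (r := 0) (by simpa using hμn)
    · simpa using fin_two_mem_unitaryGroup (p := q) (r := √(1 - normSq q))
        (by rw [normSq_ofReal, Real.mul_self_sqrt (by linarith)]; ring)
  · exact absurd (hasCommonEigenvector_of_normSq_eq_one μ (conj μ) heq) h
  · have hs : √(normSq q - 1) ≠ 0 := (Real.sqrt_pos.2 (by linarith)).ne'
    refine .of_pairConj (pairConj_diagonal μ (conj μ) q (ε := -1) hs ?_) ?_
    · rw [Real.sq_sqrt (by linarith)]
      ring
    · simpa using conjRealOrUnitary_of_su11 μ 0 q √(normSq q - 1)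

theorem conjRealOrUnitary_of_traces {A B : Matrix (Fin 2) (Fin 2) ℂ} (hdA : A.det = 1)
    (hdB : B.det = 1) (hAB : ¬HasCommonEigenvector A B) (hA : A.trace.im = 0)
    (hB : B.trace.im = 0) (hAB' : (A * B).trace.im = 0) : ConjRealOrUnitary A B := by
  obtain ⟨μ, hμ⟩ := Module.End.exists_eigenvalue (toLin' A)
  obtain ⟨v, hv, hv0⟩ := hμ.exists_hasEigenvector
  rw [Module.End.mem_eigenspace_iff, toLin'_apply] at hv
  have hc := pairConj_companion hdA hdB hAB hv0 hv
  by_cases hμ : μ.im = 0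
  · exact ⟨_, _, hc, Or.inl ⟨by simp [mem_realMatrices_iff, Fin.forall_fin_two, hμ, hB, hAB'],
      by simp [mem_realMatrices_iff, Fin.forall_fin_two, hB]⟩⟩
  · have htr : μ + μ⁻¹ = A.trace := by
      obtain ⟨P, hP, -⟩ := hc
      rw [← trace_units_conj P A, hP, trace_fin_two_of]
    exact .of_pairConj hc (conjRealOrUnitary_of_elliptic hμ
      (inv_eq_conj_of_im_add_inv_eq_zero hμ (htr ▸ hA)) hB hAB'
      fun h => hAB (hc.symm.hasCommonEigenvector h))

/-- Matrix form of Lemma 1: if `A, B ∈ SL(2,ℂ)` have no common eigenvector and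
`tr A`, `tr B`, `tr (A*B)` are all real, then the subgroup generated by `A` and `B`
is simultaneously conjugate in `GL(2,ℂ)` either into the real matrices or into the
unitary matrices. -/
theorem conj_subgroup_real_or_unitary (A B : Matrix.SpecialLinearGroup (Fin 2) ℂ)
    (hcommon : ¬ ∃ v : Fin 2 → ℂ, v ≠ 0 ∧
      (∃ μ : ℂ, (A : Matrix (Fin 2) (Fin 2) ℂ).mulVec v = μ • v) ∧
      (∃ ν : ℂ, (B : Matrix (Fin 2) (Fin 2) ℂ).mulVec v = ν • v))
    (hA : (Matrix.trace ((A : Matrix (Fin 2) (Fin 2) ℂ))).im = 0)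
    (hB : (Matrix.trace ((B : Matrix (Fin 2) (Fin 2) ℂ))).im = 0)
    (hAB : (Matrix.trace ((A * B : Matrix.SpecialLinearGroup (Fin 2) ℂ) :
        Matrix (Fin 2) (Fin 2) ℂ)).im = 0) :
    ∃ P : GL (Fin 2) ℂ,
      (∀ C ∈ Subgroup.closure {A, B}, ∀ i j : Fin 2,
        (((P : Matrix (Fin 2) (Fin 2) ℂ) *
          ((C : Matrix.SpecialLinearGroup (Fin 2) ℂ) : Matrix (Fin 2) (Fin 2) ℂ) *
          ((P⁻¹ : GL (Fin 2) ℂ) : Matrix (Fin 2) (Fin 2) ℂ)) i j).im = 0) ∨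
      (∀ C ∈ Subgroup.closure {A, B},
        ((P : Matrix (Fin 2) (Fin 2) ℂ) *
          ((C : Matrix.SpecialLinearGroup (Fin 2) ℂ) : Matrix (Fin 2) (Fin 2) ℂ) *
          ((P⁻¹ : GL (Fin 2) ℂ) : Matrix (Fin 2) (Fin 2) ℂ)) ∈
          Matrix.unitaryGroup (Fin 2) ℂ) := by
  obtain ⟨_, _, ⟨P, rfl, rfl⟩, hreal | hunit⟩ :=
    conjRealOrUnitary_of_traces A.det_coe B.det_coe hcommon hA hB
      (by rwa [← Matrix.SpecialLinearGroup.coe_mul])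
  · refine ⟨P, Or.inl fun C hC => mem_realMatrices_iff.1 ?_⟩
    refine conj_mem_of_mem_closure (S := (realMatrices (Fin 2)).toSubmonoid)
      (fun M hM _ => adjugate_mem_realMatrices hM) P ?_ hC
    rintro _ (rfl | rfl)
    exacts [hreal.1, hreal.2]
  · refine ⟨P, Or.inr fun C hC =>
      conj_mem_of_mem_closure (fun M hM => adjugate_mem_unitaryGroup hM) P ?_ hC⟩
    rintro _ (rfl | rfl)
    exacts [hunit.1, hunit.2]
end

section
/- Let Γ be a subgroup of SL(2,ℂ) such that every element of Γ has real trace, the elements of Γ have no common eigenvector in ℂ², and Γ contains an element A with |tr(A)| > 2. Then there exists P ∈ GL(2,ℂ) such that P·C·P⁻¹ has all real entries for every C ∈ Γ (i.e. Γ is conjugate to a subgroup of SL(2,ℝ)). -/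
/-!
Since `tr A` is real with `|tr A| > 2`, the element `A` has distinct real eigenvalues `l ≠ m`,
so after a conjugation `diag (l, m)` lies in the group. For every `M` in the group both `tr M`
and `tr (diag (l, m) * M)` are real, which forces the diagonal entries of `M` to be real. Then
`(M * N) 0 0` being real makes every product `M 0 1 * N 1 0` real. Without a common eigenvector
there are `B`, `C` in the group with `B 1 0 ≠ 0` and `C 0 1 ≠ 0`, and conjugating by
`diag (B 1 0, 1)` makes all off-diagonal entries real as well.
-/

open Matrix ConjAct

theorem exists_ne_add_eq_mul_eq_one_of_two_lt_abs {T : ℝ} (hT : 2 < |T|) :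
    ∃ l m : ℝ, l ≠ m ∧ l + m = T ∧ l * m = 1 := by
  have hdisc : 0 < T ^ 2 - 4 := by nlinarith [sq_abs T, abs_nonneg T]
  have hs := Real.sq_sqrt hdisc.le
  have hs_pos := Real.sqrt_pos.mpr hdisc
  refine ⟨(T + √(T ^ 2 - 4)) / 2, (T - √(T ^ 2 - 4)) / 2, fun h => ?_, by ring,
    by linear_combination -hs / 4⟩
  linarith

theorem Complex.im_div_eq_zero_of_im_mul_eq_zero {x y z : ℂ} (hx : x ≠ 0)
    (hy : (x * y).im = 0) (hz : (x * z).im = 0) : (z / y).im = 0 := by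
  rw [← mul_div_mul_left z y hx]
  simp [Complex.div_im, hy, hz]

namespace Matrix

section Field

variable {K : Type*} [Field K]

theorem exists_mulVec_eq_smul_of_eval_charpoly_fin_two (A : Matrix (Fin 2) (Fin 2) K) {l : K}
    (hl : l ^ 2 - A.trace * l + A.det = 0) : ∃ v, v ≠ 0 ∧ A *ᵥ v = l • v := by
  have hdet : (A - l • 1).det = 0 := by
    simp only [det_fin_two, trace_fin_two] at hl ⊢
    simp only [sub_apply, smul_apply, one_apply_eq, one_apply_ne, ne_eq, zero_ne_one,
      one_ne_zero, not_false_eq_true, smul_eq_mul, mul_one, mul_zero, sub_zero]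
    linear_combination hl
  obtain ⟨v, hv, hAv⟩ := exists_mulVec_eq_zero_iff.mpr hdet
  exact ⟨v, hv, by rwa [sub_mulVec, smul_mulVec, one_mulVec, sub_eq_zero] at hAv⟩

theorem exists_conj_eq_diagonal_fin_two (A : Matrix (Fin 2) (Fin 2) K) {l m : K}
    (hlm : l ≠ m) (hsum : l + m = A.trace) (hprod : l * m = A.det) :
    ∃ P : GL (Fin 2) K, toConjAct P • A = diagonal ![l, m] := by
  obtain ⟨u, hu, hAu⟩ := A.exists_mulVec_eq_smul_of_eval_charpoly_fin_two (l := l)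
    (by rw [← hsum, ← hprod]; ring)
  obtain ⟨w, hw, hAw⟩ := A.exists_mulVec_eq_smul_of_eval_charpoly_fin_two (l := m)
    (by rw [← hsum, ← hprod]; ring)
  set V : Matrix (Fin 2) (Fin 2) K := (of ![u, w])ᵀ
  have hV : IsUnit V := by
    refine linearIndependent_cols_iff_isUnit.mp ?_
    rw [of_col]
    refine Module.End.eigenvectors_linearIndependent' (toLin' A) ![l, m] ?_ _ fun i => ?_
    · intro i j
      fin_cases i <;> fin_cases j <;> simp [hlm, hlm.symm]
    · fin_cases i
      · exact ⟨Module.End.mem_eigenspace_iff.mpr (by simpa using hAu), hu⟩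
      · exact ⟨Module.End.mem_eigenspace_iff.mpr (by simpa using hAw), hw⟩
  have hAV : A * V = V * diagonal ![l, m] := by
    ext i j
    fin_cases j
    · simpa [V, mul_apply, mulVec, dotProduct, mul_comm] using congrFun hAu i
    · simpa [V, mul_apply, mulVec, dotProduct, mul_comm] using congrFun hAw i
  refine ⟨hV.unit⁻¹, ?_⟩
  rw [units_smul_def, ofConjAct_toConjAct, inv_inv, mul_assoc, Units.inv_mul_eq_iff_eq_mul]
  exact hAV

theorem exists_mem_conj_apply_ne_zero_fin_two {T : Set (Matrix (Fin 2) (Fin 2) K)}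
    (hT : ¬ ∃ v : Fin 2 → K, v ≠ 0 ∧ ∀ M ∈ T, ∃ μ : K, M *ᵥ v = μ • v)
    (P : GL (Fin 2) K) {i j : Fin 2} (hij : i ≠ j) : ∃ M ∈ T, (toConjAct P • M) i j ≠ 0 := by
  by_contra! h
  set e : Fin 2 → K := Pi.single j 1
  refine hT ⟨(↑P⁻¹ : Matrix (Fin 2) (Fin 2) K) *ᵥ e, ?_, fun M hM => ⟨(toConjAct P • M) j j, ?_⟩⟩
  · rw [Ne, ← mulVec_zero (↑P⁻¹ : Matrix (Fin 2) (Fin 2) K),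
      (mulVec_injective_iff_isUnit.mpr (Units.isUnit _)).eq_iff]
    simp [e]
  · -- `e` is an eigenvector of `P M P⁻¹`, so `P⁻¹ e` is one of `M`
    have hcol : (toConjAct P • M) *ᵥ e = (toConjAct P • M) j j • e := by
      rw [mulVec_single_one]
      ext k
      fin_cases i <;> fin_cases j <;> fin_cases k <;> simp_all [e]
    rw [units_smul_def, ofConjAct_toConjAct] at hcol ⊢
    rw [← mulVec_smul, ← hcol, mulVec_mulVec, mulVec_mulVec, ← mul_assoc, ← mul_assoc,
      Units.inv_mul, one_mul]

end Field

variable {M N : Matrix (Fin 2) (Fin 2) ℂ}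

theorem im_diag_eq_zero_of_im_trace_eq_zero {l m : ℝ} (hlm : l ≠ m) (hM : M.trace.im = 0)
    (hDM : (diagonal ![(l : ℂ), m] * M).trace.im = 0) : (M 0 0).im = 0 ∧ (M 1 1).im = 0 := by
  simp only [trace_fin_two, diagonal_mul, Complex.add_im] at hM hDM
  simp only [Fin.isValue, cons_val_zero, cons_val_one, cons_val_fin_one, Complex.mul_im,
    Complex.ofReal_re, Complex.ofReal_im, zero_mul, add_zero] at hDM
  have h : (l - m) * (M 0 0).im = 0 := by linear_combination hDM - m * hM
  have h₀ := (mul_eq_zero.mp h).resolve_left (sub_ne_zero.mpr hlm)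
  exact ⟨h₀, by linarith⟩

theorem im_apply_zero_one_mul_apply_one_zero_eq_zero (hM : (M 0 0).im = 0)
    (hN : (N 0 0).im = 0) (hMN : ((M * N) 0 0).im = 0) : (M 0 1 * N 1 0).im = 0 := by
  simpa [mul_apply, Fin.sum_univ_two, Complex.mul_im, hM, hN] using hMN

theorem exists_conj_forall_im_eq_zero_of_diagonal_mem (S : Submonoid (Matrix (Fin 2) (Fin 2) ℂ))
    (htr : ∀ M ∈ S, M.trace.im = 0) {l m : ℝ} (hlm : l ≠ m) (hD : diagonal ![(l : ℂ), m] ∈ S)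
    (h₁₀ : ∃ B ∈ S, B 1 0 ≠ 0) (h₀₁ : ∃ C ∈ S, C 0 1 ≠ 0) :
    ∃ Q : GL (Fin 2) ℂ, ∀ M ∈ S, ∀ i j, ((toConjAct Q • M) i j).im = 0 := by
  have hdiag (M) (hM : M ∈ S) : (M 0 0).im = 0 ∧ (M 1 1).im = 0 :=
    im_diag_eq_zero_of_im_trace_eq_zero hlm (htr M hM) (htr _ (S.mul_mem hD hM))
  have hoff (M) (hM : M ∈ S) (N) (hN : N ∈ S) : (M 0 1 * N 1 0).im = 0 :=
    im_apply_zero_one_mul_apply_one_zero_eq_zero (hdiag M hM).1 (hdiag N hN).1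
      (hdiag _ (S.mul_mem hM hN)).1
  obtain ⟨B, hB, hB₁₀⟩ := h₁₀
  obtain ⟨C, hC, hC₀₁⟩ := h₀₁
  let Q : GL (Fin 2) ℂ := ⟨diagonal ![B 1 0, 1], diagonal ![(B 1 0)⁻¹, 1],
    by ext i j; fin_cases i <;> fin_cases j <;> simp [hB₁₀],
    by ext i j; fin_cases i <;> fin_cases j <;> simp [hB₁₀]⟩
  refine ⟨Q, fun M hM i j => ?_⟩
  simp only [units_smul_def, ofConjAct_toConjAct, Q, Units.inv_mk, diagonal_mul, mul_diagonal]
  fin_cases i <;> fin_cases j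
  · simpa [mul_right_comm _ (M 0 0), hB₁₀] using (hdiag M hM).1
  · simpa [mul_comm] using hoff M hM B hB
  · simpa [div_eq_mul_inv] using
      Complex.im_div_eq_zero_of_im_mul_eq_zero hC₀₁ (hoff C hC B hB) (hoff C hC M hM)
  · simpa using (hdiag M hM).2

end Matrix

/-- Matrix form of Lemma 2: a subgroup of `SL(2,ℂ)` all of whose elements have real
trace, whose elements have no common eigenvector, and which contains an element with
`|trace| > 2`, is conjugate in `GL(2,ℂ)` into the real matrices. -/
theorem conj_subgroup_to_real (Γ : Subgroup (Matrix.SpecialLinearGroup (Fin 2) ℂ))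
    (htr : ∀ C ∈ Γ, (Matrix.trace ((C : Matrix.SpecialLinearGroup (Fin 2) ℂ) :
        Matrix (Fin 2) (Fin 2) ℂ)).im = 0)
    (hcommon : ¬ ∃ v : Fin 2 → ℂ, v ≠ 0 ∧ ∀ C ∈ Γ,
      ∃ μ : ℂ, ((C : Matrix.SpecialLinearGroup (Fin 2) ℂ) :
        Matrix (Fin 2) (Fin 2) ℂ).mulVec v = μ • v)
    (hhyp : ∃ A ∈ Γ, 2 < ‖(Matrix.trace
        ((A : Matrix.SpecialLinearGroup (Fin 2) ℂ) : Matrix (Fin 2) (Fin 2) ℂ))‖) :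
    ∃ P : GL (Fin 2) ℂ, ∀ C ∈ Γ, ∀ i j : Fin 2,
      (((P : Matrix (Fin 2) (Fin 2) ℂ) *
        ((C : Matrix.SpecialLinearGroup (Fin 2) ℂ) : Matrix (Fin 2) (Fin 2) ℂ) *
        ((P⁻¹ : GL (Fin 2) ℂ) : Matrix (Fin 2) (Fin 2) ℂ)) i j).im = 0 := by
  obtain ⟨A, hAΓ, hA⟩ := hhyp
  obtain ⟨t, ht⟩ : ∃ t : ℝ, (t : ℂ) = (A : Matrix (Fin 2) (Fin 2) ℂ).trace :=
    ⟨_, Complex.ext rfl (htr A hAΓ).symm⟩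
  rw [← ht, Complex.norm_real, Real.norm_eq_abs] at hA
  obtain ⟨l, m, hlm, hsum, hprod⟩ := exists_ne_add_eq_mul_eq_one_of_two_lt_abs hA
  obtain ⟨P, hP⟩ := exists_conj_eq_diagonal_fin_two (A : Matrix (Fin 2) (Fin 2) ℂ)
    (Complex.ofReal_injective.ne hlm) (by rw [← ht, ← hsum, Complex.ofReal_add])
    (by rw [A.2, ← Complex.ofReal_mul, hprod, Complex.ofReal_one])
  let S₀ := Γ.toSubmonoid.map SpecialLinearGroup.coeMonoidHom
  let S := S₀.map (MulDistribMulAction.toMonoidHom _ (toConjAct P))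
  have hS₀ : ¬ ∃ v : Fin 2 → ℂ, v ≠ 0 ∧ ∀ M ∈ S₀, ∃ μ : ℂ, M *ᵥ v = μ • v := by
    simpa [S₀] using hcommon
  have hoff {i j : Fin 2} (hij : i ≠ j) : ∃ B ∈ S, B i j ≠ 0 := by
    obtain ⟨M, hM, hMij⟩ := exists_mem_conj_apply_ne_zero_fin_two hS₀ P hij
    exact ⟨_, Submonoid.mem_map_of_mem _ hM, hMij⟩
  have htrS : ∀ M ∈ S, M.trace.im = 0 := by
    rintro _ ⟨_, ⟨C, hC, rfl⟩, rfl⟩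
    rw [MulDistribMulAction.toMonoidHom_apply, units_smul_def, trace_units_conj]
    exact htr C hC
  obtain ⟨Q, hQ⟩ := exists_conj_forall_im_eq_zero_of_diagonal_mem S htrS hlm
    ⟨_, ⟨A, hAΓ, rfl⟩, hP⟩ (hoff (by decide)) (hoff (by decide))
  refine ⟨Q * P, fun C hC i j => ?_⟩
  simpa [units_smul_def, mul_assoc] using hQ _ ⟨_, ⟨C, hC, rfl⟩, rfl⟩ i j
end
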